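/- Cooley–Tukey decomposition (odd part): under the same setup, for every natural number k, P_{k+M} = E_k − ω_N^k O_k. -/

import Mathlib

/-!
With `x = ωN ^ (k + M)` the transform is the polynomial `∑ pⱼ Xʲ` evaluated at `x`, which splits
into its even and odd parts as `E(x²) + x · O(x²)`. Since `ωN ^ M = -1` we have `x = -ωN ^ k`, and
since `ωN ^ 2 = ωM` we have `x² = ωM ^ k`.
-/

open Complex Finset

theorem Fin.sum_univ_two_mul {β : Type*} [AddCommMonoid β] (M : ℕ) (f : Fin (2 * M) → β) :
    ∑ i, f i = ∑ j : Fin M, f ⟨2 * j, by omega⟩ + ∑ j : Fin M, f ⟨2 * j + 1, by omega⟩ := by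
  rw [← (finProdFinEquiv.trans (finCongr (Nat.mul_comm M 2))).sum_comp, Fintype.sum_prod_type,
    ← sum_add_distrib]
  refine sum_congr rfl fun j _ => ?_
  rw [Fin.sum_univ_two]
  congr 2 <;> ext <;> simp [finProdFinEquiv, add_comm]

theorem sum_mul_pow_eq_even_add_odd {R : Type*} [CommSemiring R] (M : ℕ) (p : Fin (2 * M) → R)
    (x : R) :
    ∑ j, p j * x ^ (j : ℕ) =
      ∑ j : Fin M, p ⟨2 * j, by omega⟩ * (x ^ 2) ^ (j : ℕ) +
        x * ∑ j : Fin M, p ⟨2 * j + 1, by omega⟩ * (x ^ 2) ^ (j : ℕ) := by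
  rw [Fin.sum_univ_two_mul, mul_sum]
  congr 1 <;> refine sum_congr rfl fun j _ => ?_ <;> ring

theorem cooley_tukey_odd (M : ℕ) (hM : 0 < M) (p : Fin (2 * M) → ℂ)
    (ωN ωM : ℂ)
    (hωN : ωN = Complex.exp (2 * Real.pi * Complex.I / ((2 * M : ℕ) : ℂ)))
    (hωM : ωM = Complex.exp (2 * Real.pi * Complex.I / (M : ℂ)))
    (k : ℕ) :
    ∑ j : Fin (2 * M), p j * ωN ^ ((j : ℕ) * (k + M)) =
      (∑ j : Fin M, p ⟨2 * (j : ℕ), by have := j.isLt; omega⟩ * ωM ^ ((j : ℕ) * k)) -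
        ωN ^ k * ∑ j : Fin M, p ⟨2 * (j : ℕ) + 1, by have := j.isLt; omega⟩ * ωM ^ ((j : ℕ) * k) := by
  have hM0 : (M : ℂ) ≠ 0 := by exact_mod_cast hM.ne'
  have hsq : ωN ^ 2 = ωM := by
    rw [hωN, hωM, ← Complex.exp_nat_mul]
    congr 1
    push_cast
    field_simp
  have hhalf : ωN ^ M = -1 := by
    rw [hωN, ← Complex.exp_nat_mul, ← Complex.exp_pi_mul_I]
    congr 1
    push_cast
    field_simp
  have hx : ωN ^ (k + M) = -ωN ^ k := by rw [pow_add, hhalf, mul_neg_one]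
  have hx2 : (-ωN ^ k) ^ 2 = ωM ^ k := by rw [neg_sq, ← pow_mul, mul_comm, pow_mul, hsq]
  simp only [pow_mul', hx, sum_mul_pow_eq_even_add_odd, hx2]
  ring
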